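/- Let V : ℝ → ℝ, λ ∈ ℝ, and let B(x,λ) be as in the context. Let E denote the 4×4 real matrix whose only nonzero entry is −1 in position (3,1) (so E is the entrywise derivative of B(x,λ) with respect to λ). Suppose z, w : ℝ → ℝ⁴ are differentiable and satisfy z'(x) = B(x,λ) z(x) and w'(x) = B(x,λ) w(x) + E z(x) for all x ∈ ℝ. Then for every x ∈ ℝ, the derivative of x ↦ ⟨z(x), J w(x)⟩ equals −z₁(x)², where z₁ denotes the first component of z. -/

import Mathlib

open Matrix

/-- The 4×4 standard symplectic matrix `J = [[0, I₂], [-I₂, 0]]`. -/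
def J4 : Matrix (Fin 4) (Fin 4) ℝ :=
  !![0, 0, 1, 0;
     0, 0, 0, 1;
     -1, 0, 0, 0;
     0, -1, 0, 0]

/-- The coefficient matrix `B(x, λ)` of the first-order system associated with the linearized
Swift–Hohenberg eigenvalue problem, with potential `V`. -/
def Bmat (V : ℝ → ℝ) (lam x : ℝ) : Matrix (Fin 4) (Fin 4) ℝ :=
  !![0, 0, 0, 1;
     0, 0, 1, -2;
     -lam - 1 + V x, 0, 0, 0;
     0, 1, 0, 0]

/-- The entrywise `λ`-derivative of `B(x, λ)`: the matrix whose only nonzero entry is `-1` in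
position `(3,1)`. -/
def Emat : Matrix (Fin 4) (Fin 4) ℝ :=
  !![0, 0, 0, 0;
     0, 0, 0, 0;
     -1, 0, 0, 0;
     0, 0, 0, 0]

/-! `Bᵀ J + J B = 0`, i.e. `z' = B z` is a Hamiltonian system. Hence in the derivative of
`⟨z, J w⟩` the two terms involving `B` cancel, and only `⟨z, J E z⟩ = -z₁²` survives. -/

section

variable {𝕜 ι : Type*} [NontriviallyNormedField 𝕜] [Fintype ι] {x : 𝕜}

theorem HasDerivAt.dotProduct {u v : 𝕜 → ι → 𝕜} {u' v' : ι → 𝕜}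
    (hu : HasDerivAt u u' x) (hv : HasDerivAt v v' x) :
    HasDerivAt (fun y => u y ⬝ᵥ v y) (u x ⬝ᵥ v' + u' ⬝ᵥ v x) x := by
  have hu' := hasDerivAt_pi.1 hu
  have hv' := hasDerivAt_pi.1 hv
  have hsum : HasDerivAt (fun y => ∑ i, u y i * v y i) (∑ i, (u' i * v x i + u x i * v' i)) x :=
    HasDerivAt.fun_sum fun i _ => (hu' i).fun_mul (hv' i)
  refine hsum.congr_deriv ?_
  simp only [_root_.dotProduct, ← Finset.sum_add_distrib]
  exact Finset.sum_congr rfl fun i _ => by ring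

theorem HasDerivAt.mulVec {m : Type*} [Fintype m] (K : Matrix m ι 𝕜) {v : 𝕜 → ι → 𝕜}
    {v' : ι → 𝕜} (hv : HasDerivAt v v' x) :
    HasDerivAt (fun y => K *ᵥ v y) (K *ᵥ v') x :=
  hasDerivAt_pi.2 fun i => by
    simpa [Matrix.mulVec] using (hasDerivAt_const x (K i)).dotProduct hv

theorem hasDerivAt_dotProduct_mulVec_of_hamiltonian {A : 𝕜 → Matrix ι ι 𝕜} {K F : Matrix ι ι 𝕜}
    {z w : 𝕜 → ι → 𝕜} (hA : (A x)ᵀ * K + K * A x = 0)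
    (hz : HasDerivAt z (A x *ᵥ z x) x) (hw : HasDerivAt w (A x *ᵥ w x + F *ᵥ z x) x) :
    HasDerivAt (fun y => z y ⬝ᵥ (K *ᵥ w y)) (z x ⬝ᵥ (K *ᵥ (F *ᵥ z x))) x := by
  convert hz.dotProduct (hw.mulVec K) using 1
  have : (A x *ᵥ z x) ⬝ᵥ (K *ᵥ w x) + z x ⬝ᵥ (K *ᵥ (A x *ᵥ w x)) = 0 := by
    rw [dotProduct_mulVec, vecMul_mulVec, ← dotProduct_mulVec,
      mulVec_mulVec, ← dotProduct_add, ← add_mulVec, hA,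
      zero_mulVec, dotProduct_zero]
  rw [mulVec_add, dotProduct_add]
  linear_combination (exp := 1) -this

end

theorem transpose_Bmat_mul_J4_add_J4_mul_Bmat (V : ℝ → ℝ) (lam x : ℝ) :
    (Bmat V lam x)ᵀ * J4 + J4 * Bmat V lam x = 0 := by
  ext i j
  fin_cases i <;> fin_cases j <;> simp [Bmat, J4, mul_apply, Fin.sum_univ_four]
  ring

theorem dotProduct_J4_mulVec_Emat_mulVec (z : Fin 4 → ℝ) :
    z ⬝ᵥ (J4 *ᵥ (Emat *ᵥ z)) = -(z 0) ^ 2 := by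
  simp [J4, Emat, mulVec, dotProduct, Fin.sum_univ_four]
  ring

/-- If `z' = B z` and `w' = B w + E z`, then `d/dx ⟨z, J w⟩ = -z₁²`. -/
theorem stmt_11 (V : ℝ → ℝ) (lam : ℝ)
    (z w : ℝ → Fin 4 → ℝ)
    (hz : ∀ x, HasDerivAt z ((Bmat V lam x) *ᵥ z x) x)
    (hw : ∀ x, HasDerivAt w ((Bmat V lam x) *ᵥ w x + Emat *ᵥ z x) x) :
    ∀ x : ℝ, HasDerivAt (fun y => z y ⬝ᵥ (J4 *ᵥ w y)) (-(z x 0) ^ 2) x := fun x =>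
  dotProduct_J4_mulVec_Emat_mulVec (z x) ▸
    hasDerivAt_dotProduct_mulVec_of_hamiltonian
      (transpose_Bmat_mul_J4_add_J4_mul_Bmat V lam x) (hz x) (hw x)
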